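/- In a labelled CFG, suppose v is a branching node whose successors are exactly v1 and v2, with Def(v) = ∅ and Use(v) = F (the free variables of its branch condition). If v ∈ Q then rv(Q,v) = F ∪ rv(Q,v1) ∪ rv(Q,v2). -/

import Mathlib

namespace Slicing

/-- A path is a nonempty list of nodes, consecutive ones related by `succ`,
starting at `v` and ending at `v'`. -/
def IsPath {V : Type} (succ : V → V → Prop) (p : List V) (v v' : V) : Prop :=
  p.Chain' succ ∧ p.head? = some v ∧ p.getLast? = some v'

/-- A control-flow graph: an edge relation and an `End` node with no successors,
reachable from every node. -/
structure CFG (V : Type) where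
  succ : V → V → Prop
  End : V
  end_no_succ : ∀ w, ¬ succ End w
  reach_end : ∀ v, ∃ p, IsPath succ p v End

variable {V : Type}

/-- `v1` postdominates `v`. -/
def PD (G : CFG V) (v v1 : V) : Prop :=
  ∀ p, IsPath G.succ p v G.End → v1 ∈ p

/-- `v1` is a proper postdominator of `v`. -/
def ProperPD (G : CFG V) (v v1 : V) : Prop :=
  PD G v v1 ∧ v1 ≠ v

/-- `v1` is a first proper postdominator of `v`: every path from `v` to any other
proper postdominator of `v` contains `v1`. -/
def IsFPPD (G : CFG V) (v v1 : V) : Prop :=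
  ProperPD G v v1 ∧
    ∀ v2, ProperPD G v v2 → v2 ≠ v1 → ∀ p, IsPath G.succ p v v2 → v1 ∈ p

/-- Maximum number of edges of an acyclic path from `v` to `v'`. -/
noncomputable def LAP (G : CFG V) (v v' : V) : ℕ :=
  sSup {n | ∃ p, IsPath G.succ p v v' ∧ p.Nodup ∧ p.length = n + 1}

/-- A node is cycle-inducing if, with `v'` its first proper postdominator,
some successor `vi` of `v` satisfies `LAP vi v' ≥ LAP v v'`. -/
def CycleInducing (G : CFG V) (v : V) : Prop :=
  ∃ v', IsFPPD G v v' ∧ ∃ vi, G.succ v vi ∧ LAP G v v' ≤ LAP G vi v'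

/-- `v` stays outside `Q` until `v'`: every path from `v` to `v'` in which `v'`
occurs only at the final position contains no node of `Q` except possibly `v'`. -/
def StaysOutside (G : CFG V) (Q : Set V) (v v' : V) : Prop :=
  ∀ p, IsPath G.succ p v v' → v' ∉ p.dropLast → ∀ w ∈ p, w ∈ Q → w = v'

/-- `v2` is data dependent on `v1`. -/
def DataDep {Var : Type} (G : CFG V) (Def Use : V → Set Var) (v1 v2 : V) : Prop :=
  ∃ x, x ∈ Use v2 ∧ x ∈ Def v1 ∧
    ∃ p, IsPath G.succ p v1 v2 ∧ 2 ≤ p.length ∧ ∀ w ∈ p.tail.dropLast, x ∉ Def w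

/-- `Q` is closed under data dependence. -/
def ClosedDD {Var : Type} (G : CFG V) (Def Use : V → Set Var) (Q : Set V) : Prop :=
  ∀ v1 v2, v2 ∈ Q → DataDep G Def Use v1 v2 → v1 ∈ Q

/-- The `Q`-relevant variables at `v`. -/
def rv {Var : Type} (G : CFG V) (Def Use : V → Set Var) (Q : Set V) (v : V) : Set Var :=
  {x | ∃ v' ∈ Q, x ∈ Use v' ∧
    ∃ p, IsPath G.succ p v v' ∧ p.Nodup ∧ ∀ w ∈ p, w ≠ v' → x ∉ Def w}

/-- `v'` is a next visible in `Q` of `v`. -/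
def IsNextVisible (G : CFG V) (Q : Set V) (v v' : V) : Prop :=
  (v' ∈ Q ∨ v' = G.End) ∧
    ∀ u, (u ∈ Q ∨ u = G.End) → ∀ p, IsPath G.succ p v u → v' ∈ p

/-- `Q` provides next visibles. -/
def ProvidesNextVisibles (G : CFG V) (Q : Set V) : Prop :=
  ∀ v, ∃ v', IsNextVisible G Q v v'

/-- A weak slice set provides next visibles and is closed under data dependence. -/
def WeakSliceSet {Var : Type} (G : CFG V) (Def Use : V → Set Var) (Q : Set V) : Prop :=
  ProvidesNextVisibles G Q ∧ ClosedDD G Def Use Q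

namespace IsPath

variable {succ : V → V → Prop}

lemma ne_nil {p : List V} {v v' : V} (h : IsPath succ p v v') : p ≠ [] := by
  rintro rfl
  simp [IsPath] at h

lemma of_cons_cons {a b v v' : V} {s : List V} (h : IsPath succ (a :: b :: s) v v') :
    IsPath succ (b :: s) b v' :=
  ⟨(List.isChain_cons_cons.mp h.1).2, rfl, by rw [← h.2.2, List.getLast?_cons_cons]⟩

lemma cons {p : List V} {v w v' : V} (hvw : succ v w) (h : IsPath succ p w v') :
    IsPath succ (v :: p) v v' := by
  obtain ⟨b, s, rfl⟩ := List.exists_cons_of_ne_nil h.ne_nil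
  obtain rfl : b = w := by simpa using h.2.1
  exact ⟨List.isChain_cons_cons.mpr ⟨hvw, h.1⟩, rfl, by rw [← h.2.2, List.getLast?_cons_cons]⟩

lemma exists_sublist_of_mem {p : List V} {v v' w : V} (h : IsPath succ p v v') (hw : w ∈ p) :
    ∃ q, IsPath succ q w v' ∧ q.Sublist p := by
  induction p generalizing v with
  | nil => simp at hw
  | cons a t ih =>
    rcases List.mem_cons.mp hw with rfl | hw
    · exact ⟨w :: t, ⟨h.1, rfl, h.2.2⟩, List.Sublist.refl _⟩
    · obtain ⟨b, s, rfl⟩ := List.exists_cons_of_ne_nil (List.ne_nil_of_mem hw)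
      obtain ⟨q, hq, hsub⟩ := ih h.of_cons_cons hw
      exact ⟨q, hq, hsub.cons a⟩

end IsPath

section Relevant

variable {Var : Type} (G : CFG V) (Def Use : V → Set Var) (Q : Set V)

lemma use_subset_rv {v : V} (hv : v ∈ Q) : Use v ⊆ rv G Def Use Q v :=
  fun _ hx => ⟨v, hv, hx, [v], ⟨List.isChain_singleton v, rfl, rfl⟩, List.nodup_singleton v,
    by simp⟩

/-- A relevant path from a successor either already passes through `v`, and then its suffix
from `v` is acyclic, or it can be extended by the edge into `v`. -/
lemma rv_succ_diff_def_subset {v w : V} (hvw : G.succ v w) :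
    rv G Def Use Q w \ Def v ⊆ rv G Def Use Q v := by
  rintro x ⟨⟨v', hv', hx, p, hp, hnd, hfree⟩, hxv⟩
  by_cases hvp : v ∈ p
  · obtain ⟨q, hq, hsub⟩ := hp.exists_sublist_of_mem hvp
    exact ⟨v', hv', hx, q, hq, hsub.nodup hnd, fun u hu => hfree u (hsub.subset hu)⟩
  · refine ⟨v', hv', hx, v :: p, hp.cons hvw, List.nodup_cons.mpr ⟨hvp, hnd⟩, ?_⟩
    rintro u (_ | ⟨_, hu⟩)
    · exact fun _ => hxv
    · exact hfree u hu

lemma mem_use_or_mem_rv_succ_of_mem_rv {v : V} {x : Var} (hx : x ∈ rv G Def Use Q v) :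
    x ∈ Use v ∨ ∃ w, G.succ v w ∧ x ∈ rv G Def Use Q w := by
  obtain ⟨v', hv', hxu, p, hp, hnd, hfree⟩ := hx
  obtain ⟨a, t, rfl⟩ := List.exists_cons_of_ne_nil hp.ne_nil
  obtain rfl : a = v := by simpa using hp.2.1
  cases t with
  | nil =>
    obtain rfl : v' = a := by simpa using hp.2.2.symm
    exact Or.inl hxu
  | cons b s =>
    exact Or.inr ⟨b, (List.isChain_cons_cons.mp hp.1).1, v', hv', hxu, b :: s, hp.of_cons_cons,
      (List.nodup_cons.mp hnd).2, fun u hu => hfree u (List.mem_cons_of_mem _ hu)⟩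

end Relevant

theorem rv_branch_general {V Var : Type} (G : CFG V)
    (Def Use : V → Set Var) (Q : Set V) (v v1 v2 : V) (F : Set Var)
    (hsucc1 : G.succ v v1) (hsucc2 : G.succ v v2)
    (huniq : ∀ w, G.succ v w → w = v1 ∨ w = v2)
    (hdef : Def v = ∅) (huse : Use v = F) (hQ : v ∈ Q) :
    rv G Def Use Q v = F ∪ rv G Def Use Q v1 ∪ rv G Def Use Q v2 := by
  subst huse
  refine Set.Subset.antisymm (fun x hx => ?_) ?_
  · rcases mem_use_or_mem_rv_succ_of_mem_rv G Def Use Q hx with hxu | ⟨w, hvw, hxw⟩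
    · exact Or.inl (Or.inl hxu)
    · rcases huniq w hvw with rfl | rfl
      · exact Or.inl (Or.inr hxw)
      · exact Or.inr hxw
  · have hsucc_subset {w : V} (hvw : G.succ v w) : rv G Def Use Q w ⊆ rv G Def Use Q v := by
      simpa [hdef] using rv_succ_diff_def_subset G Def Use Q hvw
    exact Set.union_subset
      (Set.union_subset (use_subset_rv G Def Use Q hQ) (hsucc_subset hsucc1))
      (hsucc_subset hsucc2)

/-- For a branching node `v ∈ Q` with successors exactly `v1` and `v2`,
`Def v = ∅` and `Use v = F`, we have `rv(Q,v) = F ∪ rv(Q,v1) ∪ rv(Q,v2)`. -/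
theorem rv_branch {V Var : Type} [Fintype V] (G : CFG V)
    (Def Use : V → Set Var) (Q : Set V) (v v1 v2 : V) (F : Set Var)
    (hsucc1 : G.succ v v1) (hsucc2 : G.succ v v2)
    (huniq : ∀ w, G.succ v w → w = v1 ∨ w = v2)
    (hdef : Def v = ∅) (huse : Use v = F) (hQ : v ∈ Q) :
    rv G Def Use Q v = F ∪ rv G Def Use Q v1 ∪ rv G Def Use Q v2 :=
  rv_branch_general G Def Use Q v v1 v2 F hsucc1 hsucc2 huniq hdef huse hQ

end Slicing
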